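/- For every vertex u of a finite simple graph G, the coreness of u is at most the h²-index of u: k_s(u) ≤ h²-index(u). -/
import Mathlib


/-- The h-index of the multiset `{f x : x ∈ s}`: the largest natural number `h`
such that at least `h` entries are greater than or equal to `h`. -/
noncomputable def hIndex {α : Type*} (s : Finset α) (f : α → ℕ) : ℕ :=
  sSup {h : ℕ | h ≤ (s.filter fun x => h ≤ f x).card}

/-- The coreness (shell-index) of a vertex `u`: the largest `k` such that `u`
belongs to a set `S` of vertices whose induced subgraph has minimum degree
at least `k`. -/
noncomputable def coreness {V : Type*} [Fintype V] (G : SimpleGraph V) [DecidableRel G.Adj]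
    (u : V) : ℕ :=
  sSup {k : ℕ | ∃ S : Finset V, u ∈ S ∧ ∀ v ∈ S, k ≤ (S.filter fun w => G.Adj v w).card}

lemma le_hIndex {α : Type*} (s : Finset α) (f : α → ℕ) (k : ℕ)
    (hk : k ≤ (s.filter fun x => k ≤ f x).card) : k ≤ hIndex s f := by
  apply le_csSup
  · exact ⟨s.card, fun h hh => le_trans hh (Finset.card_filter_le _ _)⟩
  · exact hk

/-- The coreness of a vertex is at most its h²-index, the h-index of the
h-indices of its neighbors (where the h-index of a vertex is the h-index of
the degrees of its neighbors). -/
theorem coreness_le_h2Index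
    {V : Type*} [Fintype V] [DecidableEq V] (G : SimpleGraph V)
    [DecidableRel G.Adj] (u : V) :
    coreness G u ≤
      hIndex (G.neighborFinset u)
        (fun v => hIndex (G.neighborFinset v) (fun w => G.degree w)) := by
  apply csSup_le
  · exact ⟨0, ⟨{u}, Finset.mem_singleton_self u, fun v _ => Nat.zero_le _⟩⟩
  · rintro k ⟨S, huS, hS⟩
    have hdeg : ∀ v ∈ S, k ≤ G.degree v := by
      intro v hv
      refine le_trans (hS v hv) ?_
      rw [← SimpleGraph.card_neighborFinset_eq_degree]
      apply Finset.card_le_card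
      intro w hw
      rw [SimpleGraph.mem_neighborFinset]
      exact (Finset.mem_filter.mp hw).2
    have hh1 : ∀ v ∈ S, k ≤ hIndex (G.neighborFinset v) (fun w => G.degree w) := by
      intro v hv
      apply le_hIndex
      refine le_trans (hS v hv) (Finset.card_le_card ?_)
      intro w hw
      rw [Finset.mem_filter] at hw ⊢
      rw [SimpleGraph.mem_neighborFinset]
      exact ⟨hw.2, hdeg w hw.1⟩
    apply le_hIndex
    refine le_trans (hS u huS) (Finset.card_le_card ?_)
    intro w hw
    rw [Finset.mem_filter] at hw ⊢
    rw [SimpleGraph.mem_neighborFinset]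
    exact ⟨hw.2, hh1 w hw.1⟩
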